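/- Let A > 1, T ≥ 1, r ≥ 1, 0 ≤ p_e ≤ 1, W > 0, d ≥ 0, and set q = p_e + (1 - p_e)/2^r. Suppose q·A^T < 1. If E Δ_ℓ satisfies E Δ_{ℓ+1} = q·A^T·E Δ_ℓ + q·((A^T - 1)/(A - 1))·W with E Δ_0 ≥ 0, then limsup_{ℓ→∞} of the error bound (1/2)·(A^d·E Δ_ℓ + ((A^d - 1)/(A - 1))·W) equals (1/2) · (A^d + q·(A^T - A^d) - 1)/(1 - q·A^T) · W/(A - 1). -/

import Mathlib

/-! Since `0 ≤ q A^T < 1`, the recursion for `E Δ_ℓ` is a contraction, so `E Δ_ℓ` converges to its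
fixed point `q (A^T - 1) W / ((A - 1)(1 - q A^T))`; the error bound therefore converges, its
limsup is its limit, and the closed form is a rational identity. -/

open Filter Topology

theorem tendsto_fixedPoint_of_affine_recursion {c b : ℝ} {x : ℕ → ℝ} (hc : |c| < 1)
    (hx : ∀ n, x (n + 1) = c * x n + b) : Tendsto x atTop (𝓝 (b / (1 - c))) := by
  set L := b / (1 - c) with hL
  have hfix : c * L + b = L := by
    have : 1 - c ≠ 0 := by linarith [le_abs_self c]
    rw [hL]
    field_simp
    ring
  have hclosed : ∀ n, x n = c ^ n * (x 0 - L) + L := by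
    intro n
    induction n with
    | zero => simp
    | succ n ih => rw [hx n, ih, pow_succ]; linear_combination hfix
  have hlim : Tendsto (fun n => c ^ n * (x 0 - L) + L) atTop (𝓝 (0 * (x 0 - L) + L)) :=
    ((tendsto_pow_atTop_nhds_zero_of_abs_lt_one hc).mul_const _).add tendsto_const_nhds
  rw [zero_mul, zero_add] at hlim
  exact hlim.congr fun n => (hclosed n).symm

theorem stmt_5_general (A W pe q : ℝ) (T r d : ℕ) (hA : 1 < A)
    (hpe0 : 0 ≤ pe) (hpe1 : pe ≤ 1)
    (hq : q = pe + (1 - pe) / 2 ^ r) (hstab : q * A ^ T < 1)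
    (EΔ : ℕ → ℝ)
    (hrec : ∀ ℓ, EΔ (ℓ + 1) = q * A ^ T * EΔ ℓ + q * ((A ^ T - 1) / (A - 1)) * W) :
    Filter.limsup (fun ℓ => (1 / 2) * (A ^ d * EΔ ℓ + (A ^ d - 1) / (A - 1) * W))
        Filter.atTop
      = 1 / 2 * ((A ^ d + q * (A ^ T - A ^ d) - 1) / (1 - q * A ^ T)) * (W / (A - 1)) := by
  have hq0 : 0 ≤ q := hq ▸ add_nonneg hpe0 (div_nonneg (by linarith) (by positivity))
  have hgain : |q * A ^ T| < 1 := by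
    rwa [abs_of_nonneg (mul_nonneg hq0 (by positivity))]
  have hEΔ := tendsto_fixedPoint_of_affine_recursion hgain hrec
  rw [((hEΔ.const_mul _).add_const _ |>.const_mul _).limsup_eq]
  have : A - 1 ≠ 0 := by linarith
  have : 1 - q * A ^ T ≠ 0 := by linarith
  field_simp
  ring

theorem stmt_5 (A W pe q : ℝ) (T r d : ℕ) (hA : 1 < A) (hT : 1 ≤ T) (hr : 1 ≤ r)
    (hpe0 : 0 ≤ pe) (hpe1 : pe ≤ 1) (hW : 0 < W)
    (hq : q = pe + (1 - pe) / 2 ^ r) (hstab : q * A ^ T < 1)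
    (EΔ : ℕ → ℝ) (h0 : 0 ≤ EΔ 0)
    (hrec : ∀ ℓ, EΔ (ℓ + 1) = q * A ^ T * EΔ ℓ + q * ((A ^ T - 1) / (A - 1)) * W) :
    Filter.limsup (fun ℓ => (1 / 2) * (A ^ d * EΔ ℓ + (A ^ d - 1) / (A - 1) * W))
        Filter.atTop
      = 1 / 2 * ((A ^ d + q * (A ^ T - A ^ d) - 1) / (1 - q * A ^ T)) * (W / (A - 1)) :=
  stmt_5_general A W pe q T r d hA hpe0 hpe1 hq hstab EΔ hrec
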